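/- arXiv:1306.3213 — 8 statements merged into one kernel-verified Lean document; each statement's English description precedes it below -/
import Mathlib

section
/- Let S be a finite set of unit vectors in ℂ^m such that for any two distinct x, y ∈ S, |x* y|² ∈ {0, α} for some fixed real α with 0 < α < 1, and every vector in S is flat (all entries have the same absolute value 1/√m). Then |S| ≤ m(m² - m + 2)/2. -/
open Finset ComplexConjugate

/-!
Write `t = ⟪z, x⟫`. For distinct members of `S` the cubic `(|t|² - α) t` vanishes, and on the
diagonal it equals `1 - α`. Expanding `conj t · t² = ∑ conj(zᵢ) xᵢ · conj(zⱼ zₖ) xⱼ xₖ`, flatness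
(`|zᵢ|² |xᵢ|² = 1/m²`) turns every term with `i ∈ {j, k}` into a multiple of `t`. Hence the cubic is a
weighted pairing of the features `conj(xᵢ) xⱼ xₖ` (`j, k ≠ i`, `{j, k}` unordered) and `xₖ` of `z` and
`x`: the members of `S` form a biorthogonal system in a space of dimension `m·C(m,2) + m`.
-/

theorem card_le_card_of_sum_mul_eq_ite {ι κ K : Type*} [Fintype ι] [DecidableEq ι] [Field K]
    (T : Finset κ) (g f : ι → κ → K) (c : ι → K) (hc : ∀ i, c i ≠ 0)
    (h : ∀ i j, ∑ k ∈ T, g i k * f j k = if i = j then c i else 0) :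
    Fintype.card ι ≤ #T := by
  classical
  let A : Matrix ι T K := .of fun i k => g i k
  let B : Matrix T ι K := .of fun k j => f j k
  have hAB : A * B = .diagonal c := by
    ext i j
    rw [Matrix.mul_apply, Matrix.diagonal_apply, ← h, ← sum_coe_sort T]
    rfl
  calc Fintype.card ι = (A * B).rank := by
        rw [hAB, Matrix.rank_diagonal, Fintype.card_subtype_true.symm]
        exact Fintype.card_congr (Equiv.subtypeEquivRight fun i => by simp [hc i])
    _ ≤ A.rank := Matrix.rank_mul_le_left A B
    _ ≤ Fintype.card T := Matrix.rank_le_card_width A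
    _ = #T := Fintype.card_coe T

theorem Finset.sq_sum_eq_sum_sym2 {ι R : Type*} [DecidableEq ι] [CommSemiring R]
    (s : Finset ι) (v : ι → R) :
    (∑ j ∈ s, v j) ^ 2 = ∑ e ∈ s.sym2, (if e.IsDiag then 1 else 2) * (e.map v).mul := by
  induction s using Finset.cons_induction with
  | empty => simp
  | cons a s ha ih =>
    have hoff : ∀ j ∈ s, (if s(a, j).IsDiag then 1 else 2) * (s(a, j).map v).mul
        = 2 * (v a * v j) := fun j hj => by
      simp [(ne_of_mem_of_not_mem hj ha).symm]
    rw [sym2_cons, sum_disjUnion, sum_map, sum_cons, sum_cons]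
    simp only [Sym2.mkEmbedding_apply]
    rw [sum_congr rfl hoff, ← ih, ← mul_sum, ← mul_sum]
    simp only [Sym2.mk_isDiag_iff, if_true, Sym2.map_mk, Sym2.mul_mk]
    ring

theorem Finset.sum_mul_sq_sum_sub {ι R : Type*} [CommRing R] (s : Finset ι) (a b : ι → R) (c : R)
    (h : ∀ i ∈ s, a i * b i = c) :
    ∑ i ∈ s, a i * (∑ j ∈ s, b j - b i) ^ 2
      = (∑ i ∈ s, a i) * (∑ j ∈ s, b j) ^ 2 - (2 * #s * c - c) * ∑ j ∈ s, b j := by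
  set t := ∑ j ∈ s, b j
  have hexpand : ∀ i ∈ s, a i * (t - b i) ^ 2 = a i * t ^ 2 - 2 * t * c + c * b i := fun i hi => by
    rw [← h i hi]; ring
  rw [sum_congr rfl hexpand, sum_add_distrib, sum_sub_distrib, ← sum_mul, ← mul_sum, ← mul_sum,
    sum_const, nsmul_eq_mul]
  ring

section Flat

variable {ι : Type*} [Fintype ι] [DecidableEq ι]

variable (ι) in
def cubicIndex : Finset (Σ _ : ι, Sym2 ι) :=
  univ.sigma fun i => (univ.erase i).sym2

theorem card_cubicIndex : #(cubicIndex ι) = Fintype.card ι * (Fintype.card ι).choose 2 := by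
  rw [cubicIndex, card_sigma, ← card_univ, ← smul_eq_mul, ← sum_const]
  refine sum_congr rfl fun i _ => ?_
  have : Nonempty ι := ⟨i⟩
  rw [card_sym2, card_erase_of_mem (mem_univ i), card_univ, Nat.sub_add_cancel Fintype.card_pos]

def cubicMonomial (x : EuclideanSpace ℂ ι) (p : Σ _ : ι, Sym2 ι) : ℂ :=
  conj (x p.1) * (p.2.map x).mul

theorem sum_cubicIndex_mul_conj_cubicMonomial_mul (z x : EuclideanSpace ℂ ι)
    (hz : ∀ i, ‖z i‖ = 1 / √(Fintype.card ι)) (hx : ∀ i, ‖x i‖ = 1 / √(Fintype.card ι)) :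
    ∑ p ∈ cubicIndex ι, (if p.2.IsDiag then 1 else 2) * (conj (cubicMonomial z p) * cubicMonomial x p)
      = conj (inner ℂ z x) * inner ℂ z x ^ 2
        - (2 * Fintype.card ι - 1) / (Fintype.card ι : ℂ) ^ 2 * inner ℂ z x := by
  set n := Fintype.card ι
  set b : ι → ℂ := fun i => conj (z i) * x i
  have hmono : ∀ p, conj (cubicMonomial z p) * cubicMonomial x p
      = conj (b p.1) * (p.2.map b).mul := by
    rintro ⟨i, e⟩
    induction e using Sym2.ind
    simp [cubicMonomial, b]
    ring
  have ht : inner ℂ z x = ∑ i, b i := by simp [b, PiLp.inner_apply, mul_comm]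
  have hb : ∀ i, conj (b i) * b i = 1 / (n : ℂ) ^ 2 := fun i => by
    have hn : √(n : ℝ) ^ 2 = n := Real.sq_sqrt n.cast_nonneg
    rw [Complex.conj_mul', norm_mul, Complex.norm_conj, hz, hx, ← sq, div_pow, one_pow, hn]
    push_cast
    ring
  calc _ = ∑ i, conj (b i) * (∑ j ∈ univ.erase i, b j) ^ 2 := by
        simp_rw [cubicIndex, sum_sigma, hmono, sq_sum_eq_sum_sym2, mul_sum]
        exact sum_congr rfl fun i _ => sum_congr rfl fun e _ => by ring
    _ = ∑ i, conj (b i) * (∑ j, b j - b i) ^ 2 := by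
        simp_rw [sum_erase_eq_sub (mem_univ _)]
    _ = _ := by
        rw [sum_mul_sq_sum_sub _ _ _ _ fun i _ => hb i, ← map_sum, ← ht, card_univ]
        ring

def flatFeature (x : EuclideanSpace ℂ ι) : (Σ _ : ι, Sym2 ι) ⊕ ι → ℂ :=
  Sum.elim (cubicMonomial x) x

variable (ι) in
noncomputable def flatWeight (α : ℝ) : (Σ _ : ι, Sym2 ι) ⊕ ι → ℂ :=
  Sum.elim (fun p => if p.2.IsDiag then 1 else 2)
    fun _ => (2 * Fintype.card ι - 1) / (Fintype.card ι : ℂ) ^ 2 - α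

theorem sum_flatWeight_mul_conj_flatFeature_mul (α : ℝ) (z x : EuclideanSpace ℂ ι)
    (hz : ∀ i, ‖z i‖ = 1 / √(Fintype.card ι)) (hx : ∀ i, ‖x i‖ = 1 / √(Fintype.card ι)) :
    ∑ k ∈ (cubicIndex ι).disjSum univ, flatWeight ι α k * conj (flatFeature z k) * flatFeature x k
      = (‖inner ℂ z x‖ ^ 2 - α) * inner ℂ z x := by
  have hlin : ∑ i, conj (z i) * x i = inner ℂ z x := by simp [PiLp.inner_apply, mul_comm]
  simp only [sum_disjSum, flatWeight, flatFeature, Sum.elim_inl, Sum.elim_inr, mul_assoc]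
  rw [sum_cubicIndex_mul_conj_cubicMonomial_mul z x hz hx, ← mul_sum, hlin, ← Complex.conj_mul']
  ring

theorem card_le_of_flat_of_angle (α : ℝ) (hα1 : α ≠ 1) (S : Finset (EuclideanSpace ℂ ι))
    (hunit : ∀ x ∈ S, ‖x‖ = 1)
    (hflat : ∀ x ∈ S, ∀ i, ‖x i‖ = 1 / √(Fintype.card ι))
    (hang : ∀ x ∈ S, ∀ y ∈ S, x ≠ y → ‖inner ℂ x y‖ ^ 2 = 0 ∨ ‖inner ℂ x y‖ ^ 2 = α) :
    #S ≤ Fintype.card ι * (Fintype.card ι).choose 2 + Fintype.card ι := by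
  have hkernel : ∀ z x : S, ∑ k ∈ (cubicIndex ι).disjSum univ,
      flatWeight ι α k * conj (flatFeature z.1 k) * flatFeature x.1 k
        = if z = x then 1 - (α : ℂ) else 0 := by
    rintro ⟨z, hz⟩ ⟨x, hx⟩
    rw [sum_flatWeight_mul_conj_flatFeature_mul α z x (hflat z hz) (hflat x hx)]
    split_ifs with hzx
    · obtain rfl : z = x := congrArg Subtype.val hzx
      rw [inner_self_eq_norm_sq_to_K, hunit z hz]
      simp
    · rcases hang z hz x hx (fun h => hzx (Subtype.ext h)) with h0 | hα
      · simp [norm_eq_zero.1 (pow_eq_zero_iff two_ne_zero |>.1 h0)]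
      · exact mul_eq_zero_of_left (by rw [← hα]; push_cast; ring) _
  have hα1' : 1 - (α : ℂ) ≠ 0 := sub_ne_zero.2 (Complex.ofReal_ne_one.2 hα1).symm
  calc #S = Fintype.card S := (Fintype.card_coe S).symm
    _ ≤ #((cubicIndex ι).disjSum univ) :=
      card_le_card_of_sum_mul_eq_ite _ (fun z k => flatWeight ι α k * conj (flatFeature z.1 k))
        (fun x k => flatFeature x.1 k) _ (fun _ => hα1') hkernel
    _ = _ := by rw [card_disjSum, card_cubicIndex, card_univ]

end Flat

theorem stmt_0_general (m : ℕ) (α : ℝ) (hα1 : α < 1)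
    (S : Finset (EuclideanSpace ℂ (Fin m)))
    (hunit : ∀ x ∈ S, ‖x‖ = 1)
    (hflat : ∀ x ∈ S, ∀ i, ‖x i‖ = 1 / Real.sqrt m)
    (hang : ∀ x ∈ S, ∀ y ∈ S, x ≠ y →
      ‖(inner ℂ x y : ℂ)‖ ^ 2 = 0 ∨ ‖(inner ℂ x y : ℂ)‖ ^ 2 = α) :
    (S.card : ℝ) ≤ m * (m ^ 2 - m + 2) / 2 := by
  have hcard := card_le_of_flat_of_angle α hα1.ne S hunit (by simpa using hflat) hang
  rw [Fintype.card_fin] at hcard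
  have hcardR : (S.card : ℝ) ≤ m * m.choose 2 + m := by exact_mod_cast hcard
  rw [Nat.cast_choose_two] at hcardR
  linarith

theorem stmt_0 (m : ℕ) (α : ℝ) (hα : 0 < α) (hα1 : α < 1)
    (S : Finset (EuclideanSpace ℂ (Fin m)))
    (hunit : ∀ x ∈ S, ‖x‖ = 1)
    (hflat : ∀ x ∈ S, ∀ i, ‖x i‖ = 1 / Real.sqrt m)
    (hang : ∀ x ∈ S, ∀ y ∈ S, x ≠ y →
      ‖(inner ℂ x y : ℂ)‖ ^ 2 = 0 ∨ ‖(inner ℂ x y : ℂ)‖ ^ 2 = α) :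
    (S.card : ℝ) ≤ m * (m ^ 2 - m + 2) / 2 :=
  stmt_0_general m α hα1 S hunit hflat hang
end

section
/- Let S be a finite set of unit vectors in ℂ^m such that for all distinct x, y ∈ S, |x* y| ∈ {0, β} where 0 < β < 1. For each x ∈ S define v_x = x ⊗ x ⊗ conj(x) ∈ ℂ^{m³}. Then the vectors {v_x : x ∈ S} are linearly independent; in particular |S| ≤ dim(span{v_x : x ∈ S}). -/
/-!
Since `⟪v_x, v_y⟫ = ⟪x, y⟫ |⟪x, y⟫|²` and `|⟪x, y⟫|` only takes the values `1` (for `x = y`),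
`0` and `β`, the Gram matrix of the `v_x` is `(1 - β²) I + β² G`, where `G` is the Gram matrix of
the `x`. As `G` is positive semidefinite and `1 - β² > 0`, the Gram matrix of the `v_x` is
positive definite, so the `v_x` are linearly independent.
-/

open Matrix
open scoped ComplexOrder

section

variable {ι : Type*} [Fintype ι]

noncomputable def tensorCube (x : EuclideanSpace ℂ ι) : EuclideanSpace ℂ (ι × ι × ι) :=
  WithLp.toLp 2 fun p => x p.1 * x p.2.1 * starRingEnd ℂ (x p.2.2)

theorem inner_tensorCube (x y : EuclideanSpace ℂ ι) :
    inner ℂ (tensorCube x) (tensorCube y) = inner ℂ x y * (‖(inner ℂ x y : ℂ)‖ ^ 2 : ℝ) := by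
  rw [Complex.ofReal_pow, ← Complex.mul_conj']
  simp only [tensorCube, PiLp.inner_apply, RCLike.inner_apply, map_mul, map_sum,
    starRingEnd_self_apply, Fintype.sum_prod_type, Finset.sum_mul_sum]
  refine Finset.sum_congr rfl fun i _ => Finset.sum_congr rfl fun k _ => ?_
  rw [Finset.mul_sum]
  refine Finset.sum_congr rfl fun j _ => ?_
  ring

variable {β : ℝ} {S : Finset (EuclideanSpace ℂ ι)}

theorem inner_tensorCube_of_mem (hunit : ∀ x ∈ S, ‖x‖ = 1)
    (hang : ∀ x ∈ S, ∀ y ∈ S, x ≠ y →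
      ‖(inner ℂ x y : ℂ)‖ = 0 ∨ ‖(inner ℂ x y : ℂ)‖ = β)
    {x y : EuclideanSpace ℂ ι} (hx : x ∈ S) (hy : y ∈ S) :
    inner ℂ (tensorCube x) (tensorCube y) =
      (if x = y then ((1 - β ^ 2 : ℝ) : ℂ) else 0) + inner ℂ ((β : ℂ) • x) ((β : ℂ) • y) := by
  rw [inner_tensorCube, inner_smul_left, inner_smul_right, Complex.conj_ofReal]
  split_ifs with hxy
  · subst hxy
    have hxx : inner ℂ x x = (1 : ℂ) := by simp [inner_self_eq_norm_sq_to_K, hunit x hx]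
    rw [hxx, norm_one]
    push_cast
    ring
  · rcases hang x hx y hy hxy with h | h
    · simp [norm_eq_zero.mp h]
    · rw [h]
      push_cast
      ring

theorem linearIndependent_tensorCube (hβ : 0 < β) (hβ1 : β < 1) (hunit : ∀ x ∈ S, ‖x‖ = 1)
    (hang : ∀ x ∈ S, ∀ y ∈ S, x ≠ y →
      ‖(inner ℂ x y : ℂ)‖ = 0 ∨ ‖(inner ℂ x y : ℂ)‖ = β) :
    LinearIndependent ℂ (fun x : S => tensorCube (x : EuclideanSpace ℂ ι)) := by
  classical
  have hgram : gram ℂ (fun x : S => tensorCube (x : EuclideanSpace ℂ ι)) =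
      diagonal (fun _ => ((1 - β ^ 2 : ℝ) : ℂ)) +
        gram ℂ (fun x : S => (β : ℂ) • (x : EuclideanSpace ℂ ι)) := by
    ext x y
    simp only [gram_apply, Matrix.add_apply, diagonal_apply,
      inner_tensorCube_of_mem hunit hang x.2 y.2, Subtype.ext_iff]
  have hdiag : 0 < ((1 - β ^ 2 : ℝ) : ℂ) := Complex.zero_lt_real.mpr (by nlinarith)
  refine linearIndependent_of_posDef_gram ?_
  rw [hgram]
  exact (PosDef.diagonal fun _ => hdiag).add_posSemidef (posSemidef_gram ℂ _)

end

theorem stmt_2 (m : ℕ) (β : ℝ) (hβ : 0 < β) (hβ1 : β < 1)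
    (S : Finset (EuclideanSpace ℂ (Fin m)))
    (hunit : ∀ x ∈ S, ‖x‖ = 1)
    (hang : ∀ x ∈ S, ∀ y ∈ S, x ≠ y →
      ‖(inner ℂ x y : ℂ)‖ = 0 ∨ ‖(inner ℂ x y : ℂ)‖ = β)
    (v : EuclideanSpace ℂ (Fin m) → EuclideanSpace ℂ (Fin m × Fin m × Fin m))
    (hv : ∀ x, ∀ p : Fin m × Fin m × Fin m,
      v x p = x p.1 * x p.2.1 * starRingEnd ℂ (x p.2.2)) :
    LinearIndependent ℂ (fun x : S => v x) ∧
      S.card ≤ Module.finrank ℂ (Submodule.span ℂ (v '' S)) := by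
  obtain rfl : v = tensorCube := funext fun x => PiLp.ext (hv x)
  have hli := linearIndependent_tensorCube hβ hβ1 hunit hang
  refine ⟨hli, ?_⟩
  rw [Set.image_eq_range]
  simpa using (finrank_span_eq_card hli).ge
end

section
/- Let x ∈ ℂ^m be a flat unit vector (every entry has absolute value 1/√m), and let v_x ∈ ℂ^{m³} be the tensor with entries (v_x)_{(i,j,k)} = x_i x_j conj(x_k). Then v_x lies in a fixed subspace of ℂ^{m³} (independent of x) of dimension at most m + m(m-1) + m(m-1)(m-2)/2 = m(m² - m + 2)/2. -/
/-!
For a flat vector `x` all `|x_i|²` are equal, so `x_i x_j conj x_j = x_i x_i conj x_i` and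
`x_i x_j conj x_i = x_j x_j conj x_j`. As the entry `x_a x_b conj x_c` is also symmetric in `a, b`,
it depends only on the label `(s(a, b), c) : Sym2 α × α`, and the labels `(s(a, b), a)` with
`a ≠ b` can be dropped. The tensors that factor through the remaining labels form a subspace,
independent of `x`, of dimension at most `m · m(m+1)/2 - m(m-1) = m(m² - m + 2)/2`.
-/

variable {α : Type*} [DecidableEq α]

abbrev ReducedIndex (α : Type*) := {q : Sym2 α × α // ¬(q.2 ∈ q.1 ∧ ¬q.1.IsDiag)}

def reduceIndex : α × α × α → ReducedIndex α
  | (i, j, k) =>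
    if hkj : k = j then ⟨(s(i, i), i), by simp⟩
    else if hki : k = i then ⟨(s(j, j), j), by simp⟩
    else ⟨(s(i, j), k), by simp [hkj, hki]⟩

def reducedTensor (x : α → ℂ) (q : ReducedIndex α) : ℂ :=
  Sym2.lift ⟨fun a b => x a * x b, fun _ _ => mul_comm _ _⟩ q.1.1 * starRingEnd ℂ (x q.1.2)

theorem tensor_eq_reducedTensor_reduceIndex {x : α → ℂ} (hx : ∀ i j, ‖x i‖ = ‖x j‖)
    (i j k : α) :
    x i * x j * starRingEnd ℂ (x k) = reducedTensor x (reduceIndex (i, j, k)) := by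
  have hnormSq : ∀ a b, x a * starRingEnd ℂ (x a) = x b * starRingEnd ℂ (x b) := by
    intro a b
    rw [Complex.mul_conj, Complex.mul_conj, Complex.normSq_eq_norm_sq,
      Complex.normSq_eq_norm_sq, hx a b]
  simp only [reduceIndex, reducedTensor]
  split_ifs with hkj hki
  · subst hkj
    simp only [Sym2.lift_mk]
    rw [mul_assoc, hnormSq k i, mul_assoc]
  · subst hki
    simp only [Sym2.lift_mk]
    rw [mul_right_comm, hnormSq k j]
    ring
  · rfl

section Card

variable [Fintype α]

theorem card_prod_subtype_ne :
    Fintype.card {p : α × α // p.1 ≠ p.2} = Fintype.card α * Fintype.card α - Fintype.card α := by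
  rw [Fintype.card_subtype, ← Finset.card_univ, ← Finset.offDiag_card]
  congr 1
  ext
  simp

theorem card_sym2_mem_not_isDiag :
    Fintype.card {q : Sym2 α × α // q.2 ∈ q.1 ∧ ¬q.1.IsDiag} =
      Fintype.card {p : α × α // p.1 ≠ p.2} := by
  refine (Fintype.card_of_bijective
    (f := fun p => ⟨(s(p.1.1, p.1.2), p.1.1), by simpa using p.2⟩) ⟨?_, ?_⟩).symm
  · rintro ⟨⟨a, b⟩, hab⟩ ⟨⟨c, d⟩, hcd⟩ h
    simp only [Subtype.mk.injEq, Prod.mk.injEq] at h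
    obtain ⟨h, rfl⟩ := h
    simp_all
  · rintro ⟨⟨z, a⟩, ha, hz⟩
    exact ⟨⟨(a, Sym2.Mem.other ha), (Sym2.other_ne hz ha).symm⟩, by simp⟩

theorem card_reducedIndex :
    (Fintype.card (ReducedIndex α) : ℝ) =
      Fintype.card α * (Fintype.card α ^ 2 - Fintype.card α + 2) / 2 := by
  have hle := Fintype.card_subtype_le (fun q : Sym2 α × α => q.2 ∈ q.1 ∧ ¬q.1.IsDiag)
  rw [Fintype.card_subtype_compl, Nat.cast_sub hle, card_sym2_mem_not_isDiag,
    card_prod_subtype_ne, Fintype.card_prod, Sym2.card, Nat.cast_sub (Nat.le_mul_self _)]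
  push_cast [Nat.cast_choose_two]
  ring

end Card

def reducedTensorSubspace (α : Type*) [DecidableEq α] :
    Submodule ℂ (EuclideanSpace ℂ (α × α × α)) :=
  LinearMap.range ((WithLp.linearEquiv 2 ℂ (α × α × α → ℂ)).symm.toLinearMap ∘ₗ
    LinearMap.funLeft ℂ ℂ reduceIndex)

theorem finrank_reducedTensorSubspace_le [Fintype α] :
    Module.finrank ℂ (reducedTensorSubspace α) ≤ Fintype.card (ReducedIndex α) :=
  (LinearMap.finrank_range_le _).trans_eq (Module.finrank_fintype_fun_eq_card ℂ)

theorem mem_reducedTensorSubspace {x : α → ℂ} (hx : ∀ i j, ‖x i‖ = ‖x j‖)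
    {w : EuclideanSpace ℂ (α × α × α)}
    (hw : ∀ p, w p = x p.1 * x p.2.1 * starRingEnd ℂ (x p.2.2)) :
    w ∈ reducedTensorSubspace α := by
  refine ⟨reducedTensor x, ?_⟩
  ext ⟨i, j, k⟩
  rw [hw, tensor_eq_reducedTensor_reduceIndex hx]
  rfl

theorem stmt_4 (m : ℕ)
    (v : EuclideanSpace ℂ (Fin m) → EuclideanSpace ℂ (Fin m × Fin m × Fin m))
    (hv : ∀ x, ∀ p : Fin m × Fin m × Fin m,
      v x p = x p.1 * x p.2.1 * starRingEnd ℂ (x p.2.2)) :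
    ∃ W : Submodule ℂ (EuclideanSpace ℂ (Fin m × Fin m × Fin m)),
      (Module.finrank ℂ W : ℝ) ≤ m * (m ^ 2 - m + 2) / 2 ∧
      ∀ x : EuclideanSpace ℂ (Fin m),
        (∀ i, ‖x i‖ = 1 / Real.sqrt m) → v x ∈ W := by
  refine ⟨reducedTensorSubspace (Fin m), ?_, fun x hx => ?_⟩
  · calc (Module.finrank ℂ (reducedTensorSubspace (Fin m)) : ℝ)
        ≤ Fintype.card (ReducedIndex (Fin m)) := by
          exact_mod_cast finrank_reducedTensorSubspace_le
      _ = m * (m ^ 2 - m + 2) / 2 := by rw [card_reducedIndex, Fintype.card_fin]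
  · exact mem_reducedTensorSubspace (x := x.ofLp) (fun i j => by rw [hx i, hx j]) (hv x)
end

section
/- Let x ∈ ℝ^m have all entries equal to ±1/√m, and let v_x ∈ ℝ^{m³} be the tensor with entries (v_x)_{(i,j,k)} = x_i x_j x_k. Then v_x lies in a fixed subspace of ℝ^{m³} (independent of x) of dimension at most m + C(m,3) = m(m² - 3m + 8)/6. -/
/-!
Every entry of `v_x` is a cubic monomial `x_a x_b x_d`. Since `x_i² = 1/m` for every `i`,
an index triple with a repeated index gives `x_i / m`, where `i` is its remaining index,
and a triple of distinct indices gives `∏_{j ∈ {a, b, d}} x_j`, which depends only on the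
underlying 3-set. So `v_x` is the image of the vector `(x / m, (∏_{j ∈ s} x_j)_{|s| = 3})` of
length `m + C(m, 3)` under one fixed linear map.
-/

open Finset

section SymmetricCube

variable {ι R : Type*} [DecidableEq ι] [CommSemiring R]

def symCubeEntry (y : ι → R) (z : {s : Finset ι // #s = 3} → R) (a b d : ι) : R :=
  if hab : a = b then y d
  else if had : a = d then y b
  else if hbd : b = d then y a
  else z ⟨{a, b, d}, card_eq_three.2 ⟨a, b, d, hab, had, hbd, rfl⟩⟩

variable (ι R) in
def symCubeMap : (ι → R) × ({s : Finset ι // #s = 3} → R) →ₗ[R] (ι × ι × ι → R) where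
  toFun q p := symCubeEntry q.1 q.2 p.1 p.2.1 p.2.2
  map_add' q q' := by
    ext ⟨a, b, d⟩
    simp only [symCubeEntry, Prod.fst_add, Prod.snd_add, Pi.add_apply]
    split_ifs <;> rfl
  map_smul' c q := by
    ext ⟨a, b, d⟩
    simp only [symCubeEntry, Prod.smul_fst, Prod.smul_snd, Pi.smul_apply, RingHom.id_apply]
    split_ifs <;> rfl

theorem finrank_range_symCubeMap_le [Fintype ι] [StrongRankCondition R] :
    Module.finrank R (LinearMap.range (symCubeMap ι R)) ≤
      Fintype.card ι + (Fintype.card ι).choose 3 :=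
  calc _ ≤ _ := LinearMap.finrank_range_le _
    _ = _ := by simp [Module.finrank_prod, Fintype.card_finset_len]

theorem mul_mul_eq_symCubeEntry {x : ι → R} {c : R} (hx : ∀ i, x i * x i = c) (a b d : ι) :
    x a * x b * x d = symCubeEntry (c • x) (fun s => ∏ j ∈ s.1, x j) a b d := by
  unfold symCubeEntry
  split_ifs with hab had hbd
  · subst hab; simp [hx]
  · subst had; simp [← hx a]; ring
  · subst hbd; simp [← hx b]; ring
  · dsimp only
    rw [prod_insert (by simp [hab, had]), prod_insert (by simpa), prod_singleton, mul_assoc]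

end SymmetricCube

theorem Nat.cast_choose_three (K : Type*) [Field K] [CharZero K] (m : ℕ) :
    (m.choose 3 : K) = m * (m - 1) * (m - 2) / 6 := by
  induction m with
  | zero => simp
  | succ n ih =>
    rw [Nat.choose_succ_succ', Nat.cast_add, ih, Nat.cast_choose_two]
    push_cast
    ring

theorem stmt_5 (m : ℕ)
    (v : EuclideanSpace ℝ (Fin m) → EuclideanSpace ℝ (Fin m × Fin m × Fin m))
    (hv : ∀ x, ∀ p : Fin m × Fin m × Fin m,
      v x p = x p.1 * x p.2.1 * x p.2.2) :
    ∃ W : Submodule ℝ (EuclideanSpace ℝ (Fin m × Fin m × Fin m)),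
      Module.finrank ℝ W ≤ m + Nat.choose m 3 ∧
      (Module.finrank ℝ W : ℝ) ≤ m * (m ^ 2 - 3 * m + 8) / 6 ∧
      ∀ x : EuclideanSpace ℝ (Fin m),
        (∀ i, x i = 1 / Real.sqrt m ∨ x i = -(1 / Real.sqrt m)) → v x ∈ W := by
  have hdim : Module.finrank ℝ ((LinearMap.range (symCubeMap (Fin m) ℝ)).map
      (WithLp.linearEquiv 2 ℝ (Fin m × Fin m × Fin m → ℝ)).symm.toLinearMap) ≤
      m + m.choose 3 := by
    simpa [LinearEquiv.finrank_map_eq] using finrank_range_symCubeMap_le (ι := Fin m) (R := ℝ)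
  refine ⟨_, hdim, ?_, fun x hx => ?_⟩
  · calc _ ≤ ((m + m.choose 3 : ℕ) : ℝ) := by exact_mod_cast hdim
      _ = _ := by rw [Nat.cast_add, Nat.cast_choose_three]; ring
  · have hsq : ∀ i, x i * x i = 1 / m := fun i => by
      rcases hx i with h | h <;>
        simp [h, ← mul_inv, Real.mul_self_sqrt (Nat.cast_nonneg m)]
    refine (Submodule.mem_map_equiv ..).2 ⟨((1 / m : ℝ) • x.ofLp, fun s => ∏ j ∈ s.1, x j), ?_⟩
    ext ⟨a, b, d⟩
    exact (mul_mul_eq_symCubeEntry hsq a b d).symm.trans (hv x (a, b, d)).symm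
end

section
/- Let k, c₂, c₃ be positive integers with c₂ ≤ c₃ < k, k ≥ 2, satisfying (6 - c₂c₃)k² - (6c₂ + 6 - 3c₂c₃)k + (6c₂ - 2c₂c₃) = 0, and additionally satisfying: if c₂ > 1 then c₃ ≥ 3c₂/2. Then either (c₂, c₃) = (2, 3), or (k, c₂, c₃) = (8, 1, 7). -/
theorem stmt_8 (k c₂ c₃ : ℕ) (hk : 2 ≤ k) (hc₂ : 0 < c₂) (hc₃ : 0 < c₃)
    (h23 : c₂ ≤ c₃) (h3k : c₃ < k)
    (heq : (6 - (c₂ : ℤ) * c₃) * k ^ 2 - (6 * c₂ + 6 - 3 * c₂ * c₃) * k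
      + (6 * c₂ - 2 * c₂ * c₃) = 0)
    (hBCN : 1 < c₂ → 3 * c₂ ≤ 2 * c₃) :
    (c₂ = 2 ∧ c₃ = 3) ∨ (k = 8 ∧ c₂ = 1 ∧ c₃ = 7) := by
  have hk1 : ((k : ℤ) - 1) ≠ 0 := by
    have : (2 : ℤ) ≤ (k : ℤ) := by exact_mod_cast hk
    linarith
  have h0 : ((k : ℤ) - 1) * (((c₂ : ℤ) * c₃ - 6) * ((k : ℤ) - 2) - 6 * (2 - c₂)) = 0 := by
    linear_combination (-1 : ℤ) * heq
  have key : ((c₂ : ℤ) * c₃ - 6) * ((k : ℤ) - 2) = 6 * (2 - (c₂ : ℤ)) := by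
    rcases mul_eq_zero.mp h0 with h | h
    · exact absurd h hk1
    · linarith
  have hkZ : (2 : ℤ) ≤ (k : ℤ) := by exact_mod_cast hk
  rcases lt_trichotomy c₂ 2 with h2 | h2 | h2
  · -- c₂ = 1
    have hc2 : c₂ = 1 := by omega
    subst hc2
    have key' : ((c₃ : ℤ) - 6) * ((k : ℤ) - 2) = 6 := by
      push_cast at key ⊢; linarith [key]
    have hkgt : (2 : ℤ) < (k : ℤ) := by
      rcases lt_or_eq_of_le hkZ with h | h
      · exact h
      · exfalso; rw [← h] at key'; simp at key'
    have hc3ge : (7 : ℤ) ≤ (c₃ : ℤ) := by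
      by_contra hcon
      push_neg at hcon
      nlinarith [key']
    have hc3k : (c₃ : ℤ) < (k : ℤ) := by exact_mod_cast h3k
    have hk8 : (8 : ℤ) ≤ (k : ℤ) := by linarith
    have hc37 : (c₃ : ℤ) = 7 := by nlinarith [key']
    have hk8' : (k : ℤ) = 8 := by
      have : ((7 : ℤ) - 6) * ((k : ℤ) - 2) = 6 := by rw [← hc37]; exact key'
      linarith
    right
    refine ⟨by exact_mod_cast hk8', rfl, by exact_mod_cast hc37⟩
  · -- c₂ = 2
    subst h2
    have key' : (2 * (c₃ : ℤ) - 6) * ((k : ℤ) - 2) = 0 := by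
      push_cast at key ⊢; linarith [key]
    rcases mul_eq_zero.mp key' with h | h
    · left
      constructor
      · rfl
      · have : (c₃ : ℤ) = 3 := by linarith
        exact_mod_cast this
    · exfalso
      have : (k : ℤ) = 2 := by linarith
      have hk2 : k = 2 := by exact_mod_cast this
      omega
  · -- c₂ ≥ 3
    exfalso
    have hb := hBCN (by omega)
    have hbZ : (3 : ℤ) * c₂ ≤ 2 * c₃ := by exact_mod_cast hb
    have hc2Z : (3 : ℤ) ≤ (c₂ : ℤ) := by exact_mod_cast h2
    have hprod : (6 : ℤ) ≤ (c₂ : ℤ) * c₃ := by nlinarith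
    nlinarith [key]
end

section
/- Let k, c₂, c₃ be positive integers with c₂ ≤ c₃ < k and k ≥ 2, satisfying (2 - c₂c₃)k² - (2c₂ + 2 - c₂c₃)k + 2c₂ = 0. Then k = 2 and c₂ = c₃ = 1. -/
theorem stmt_9 (k c₂ c₃ : ℕ) (hk : 2 ≤ k) (hc₂ : 0 < c₂) (hc₃ : 0 < c₃)
    (h23 : c₂ ≤ c₃) (h3k : c₃ < k)
    (heq : (2 - (c₂ : ℤ) * c₃) * k ^ 2 - (2 * c₂ + 2 - c₂ * c₃) * k + 2 * c₂ = 0) :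
    k = 2 ∧ c₂ = 1 ∧ c₃ = 1 := by
  have hfac : ((k : ℤ) - 1) * ((2 - (c₂ : ℤ) * c₃) * k - 2 * c₂) = 0 := by
    linear_combination heq
  have hk1 : (k : ℤ) - 1 ≠ 0 := by
    have : (2 : ℤ) ≤ (k : ℤ) := by exact_mod_cast hk
    omega
  have h2 : (2 - (c₂ : ℤ) * c₃) * k = 2 * c₂ := by
    rcases mul_eq_zero.mp hfac with h | h
    · exact absurd h hk1
    · linarith
  have hkz : (2 : ℤ) ≤ (k : ℤ) := by exact_mod_cast hk
  have hc2z : (1 : ℤ) ≤ (c₂ : ℤ) := by exact_mod_cast hc₂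
  have hc3z : (1 : ℤ) ≤ (c₃ : ℤ) := by exact_mod_cast hc₃
  have hprod : (c₂ : ℤ) * c₃ < 2 := by nlinarith
  have hc2 : c₂ = 1 := by nlinarith
  have hc3 : c₃ = 1 := by nlinarith
  subst hc2 hc3
  have : (k : ℤ) = 2 := by push_cast at h2; linarith
  exact ⟨by exact_mod_cast this, rfl, rfl⟩
end

section
/- The eigenvalues of the tridiagonal 5×5 matrix B = [[0,1,0,0,0],[k,0,c₂,0,0],[0,k-1,0,c₃,0],[0,0,k-c₂,0,k],[0,0,0,k-c₃,0]] are exactly ±k, ±√(k + c₂(k - c₃ - 1)), and 0. -/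
open Matrix

theorem Matrix.exists_mulVec_eq_smul_iff_det_sub_eq_zero {n R : Type*} [Fintype n] [DecidableEq n]
    [CommRing R] [IsDomain R] (A : Matrix n n R) (μ : R) :
    (∃ v ≠ 0, A *ᵥ v = μ • v) ↔ (A - μ • 1).det = 0 := by
  simp only [← exists_mulVec_eq_zero_iff, sub_mulVec, smul_mulVec, one_mulVec, sub_eq_zero]

def bipartiteDiameterFourIntersectionMatrix {R : Type*} [CommRing R] (k c₂ c₃ : R) :
    Matrix (Fin 5) (Fin 5) R :=
  !![0, 1, 0, 0, 0;
     k, 0, c₂, 0, 0;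
     0, k - 1, 0, c₃, 0;
     0, 0, k - c₂, 0, k;
     0, 0, 0, k - c₃, 0]

theorem det_bipartiteDiameterFourIntersectionMatrix_sub_smul_one {R : Type*} [CommRing R]
    (k c₂ c₃ μ : R) :
    (bipartiteDiameterFourIntersectionMatrix k c₂ c₃ - μ • 1).det =
      -(μ * (μ ^ 2 - k ^ 2) * (μ ^ 2 - (k + c₂ * (k - c₃ - 1)))) := by
  have hsub : bipartiteDiameterFourIntersectionMatrix k c₂ c₃ - μ • 1 =
      !![-μ, 1, 0, 0, 0;
         k, -μ, c₂, 0, 0;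
         0, k - 1, -μ, c₃, 0;
         0, 0, k - c₂, -μ, k;
         0, 0, 0, k - c₃, -μ] := by
    ext i j
    fin_cases i <;> fin_cases j <;> simp [bipartiteDiameterFourIntersectionMatrix]
  rw [hsub]
  simp only [det_succ_row_zero, det_unique, Fin.sum_univ_succ, Fin.succAbove, of_apply, cons_val',
    cons_val, submatrix_apply, Fin.reduceSucc, Fin.reduceCastSucc, Fin.reduceLT,
    Fin.val_succ, Fin.val_zero, Fin.default_eq_zero, ↓reduceIte]
  ring

theorem Real.mul_sq_sub_sq_mul_sq_sub_eq_zero_iff {k s μ : ℝ} (hs : 0 ≤ s) :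
    μ * (μ ^ 2 - k ^ 2) * (μ ^ 2 - s) = 0 ↔ μ ∈ ({k, -k, √s, -√s, 0} : Set ℝ) := by
  conv_lhs => rw [← Real.sq_sqrt hs]
  simp only [mul_eq_zero, sub_eq_zero, sq_eq_sq_iff_eq_or_eq_neg, Set.mem_insert_iff,
    Set.mem_singleton_iff]
  tauto

theorem stmt_12 (k c₂ c₃ : ℝ) (h1 : 1 ≤ c₂) (h2 : c₂ ≤ c₃) (h3 : c₃ ≤ k) :
    let B : Matrix (Fin 5) (Fin 5) ℝ :=
      !![0, 1, 0, 0, 0;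
         k, 0, c₂, 0, 0;
         0, k - 1, 0, c₃, 0;
         0, 0, k - c₂, 0, k;
         0, 0, 0, k - c₃, 0]
    ∀ μ : ℝ, (∃ v : Fin 5 → ℝ, v ≠ 0 ∧ B.mulVec v = μ • v) ↔
      μ ∈ ({k, -k, Real.sqrt (k + c₂ * (k - c₃ - 1)),
            -Real.sqrt (k + c₂ * (k - c₃ - 1)), 0} : Set ℝ) := by
  intro B μ
  -- k + c₂ (k - c₃ - 1) ≥ k - c₂ ≥ 0, so the square root is not a junk value
  have hs : 0 ≤ k + c₂ * (k - c₃ - 1) := by nlinarith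
  have hB : B = bipartiteDiameterFourIntersectionMatrix k c₂ c₃ := rfl
  rw [Matrix.exists_mulVec_eq_smul_iff_det_sub_eq_zero, hB,
    det_bipartiteDiameterFourIntersectionMatrix_sub_smul_one, neg_eq_zero,
    Real.mul_sq_sub_sq_mul_sq_sub_eq_zero_iff hs]
end

section
/- The eight columns of the matrix (1/2) M, where M = [[1,1,1,1,1,1,1,1],[1,1,-1,-1,1,1,-1,-1],[1,-1,1,-1,1,-1,1,-1],[1,-1,-1,1,-1,1,1,-1]], form a {0, 1/4}-set of 8 unit vectors in ℝ⁴: each column is a unit vector and any two distinct columns x, y satisfy (xᵀy)² ∈ {0, 1/4}. -/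
set_option maxHeartbeats 2000000

private lemma u0 {α : Type*} (a b c d : α) : ![a,b,c,d] (0:Fin 4) = a := rfl
private lemma u1 {α : Type*} (a b c d : α) : ![a,b,c,d] (1:Fin 4) = b := rfl
private lemma u2 {α : Type*} (a b c d : α) : ![a,b,c,d] (2:Fin 4) = c := rfl
private lemma u3 {α : Type*} (a b c d : α) : ![a,b,c,d] (3:Fin 4) = d := rfl
private lemma v0 (a b c d e f g h : ℝ) : ![a,b,c,d,e,f,g,h] (0:Fin 8) = a := rfl
private lemma v1 (a b c d e f g h : ℝ) : ![a,b,c,d,e,f,g,h] (1:Fin 8) = b := rfl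
private lemma v2 (a b c d e f g h : ℝ) : ![a,b,c,d,e,f,g,h] (2:Fin 8) = c := rfl
private lemma v3 (a b c d e f g h : ℝ) : ![a,b,c,d,e,f,g,h] (3:Fin 8) = d := rfl
private lemma v4 (a b c d e f g h : ℝ) : ![a,b,c,d,e,f,g,h] (4:Fin 8) = e := rfl
private lemma v5 (a b c d e f g h : ℝ) : ![a,b,c,d,e,f,g,h] (5:Fin 8) = f := rfl
private lemma v6 (a b c d e f g h : ℝ) : ![a,b,c,d,e,f,g,h] (6:Fin 8) = g := rfl
private lemma v7 (a b c d e f g h : ℝ) : ![a,b,c,d,e,f,g,h] (7:Fin 8) = h := rfl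

theorem stmt_14 :
    let M : Matrix (Fin 4) (Fin 8) ℝ :=
      (1 / 2 : ℝ) • !![1, 1, 1, 1, 1, 1, 1, 1;
                       1, 1, -1, -1, 1, 1, -1, -1;
                       1, -1, 1, -1, 1, -1, 1, -1;
                       1, -1, -1, 1, -1, 1, 1, -1]
    (∀ j : Fin 8, ∑ i : Fin 4, (M i j) ^ 2 = 1) ∧
    (∀ j₁ j₂ : Fin 8, j₁ ≠ j₂ →
      (∑ i : Fin 4, M i j₁ * M i j₂) ^ 2 = 0 ∨
      (∑ i : Fin 4, M i j₁ * M i j₂) ^ 2 = 1 / 4) := by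
  intro M
  constructor
  · intro j
    fin_cases j <;>
      · simp only [M, Fin.sum_univ_four, Matrix.smul_apply, Matrix.of_apply,
          smul_eq_mul, u0, u1, u2, u3, v0, v1, v2, v3, v4, v5, v6, v7]
        norm_num
  · intro j₁ j₂ _
    fin_cases j₁ <;> fin_cases j₂ <;> first
      | exact absurd rfl ‹_›
      | · simp only [M, Fin.sum_univ_four, Matrix.smul_apply, Matrix.of_apply,
            smul_eq_mul, u0, u1, u2, u3, v0, v1, v2, v3, v4, v5, v6, v7]
          norm_num
end
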